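/- Let m ≥ 2, θ₀ ∈ ℕ with θ₀ ≥ 1, and ε₁ ∈ (0,1). Let A₀, …, A_{θ₀−1} ∈ ℂ^m, and let ζ : B₁(0)\{0} → ℝ^m be C¹ with |∇ζ(x)| ≤ C |x|^{2θ₀−1−ε₁} for all 0 < |x| < 1. Suppose that the map Φ(x) := Σ_{j=0}^{θ₀−1} Re(A_j x^{θ₀+j}) + ζ(x) is conformal on B₁(0)\{0}, i.e. ∂₁Φ·∂₂Φ = 0 and |∂₁Φ| = |∂₂Φ| pointwise. Then for every s ∈ {0, 1, …, θ₀−1}: Σ_{j=0}^{s} (θ₀+j)(θ₀+s−j) ⟨A_j, A_{s−j}⟩ = 0. In particular (s = 0), ⟨A₀, A₀⟩ = 0. -/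

import Mathlib

open MeasureTheory Metric Complex

/-- The map `Φ(x) = Σ_{j<θ₀} Re(A_j x^{θ₀+j}) + ζ(x)`, componentwise. -/
noncomputable def PhiExp (m θ₀ : ℕ) (A : ℕ → Fin m → ℂ) (ζ : ℂ → Fin m → ℝ)
    (x : ℂ) (k : Fin m) : ℝ :=
  (∑ j ∈ Finset.range θ₀, (A j k * x ^ (θ₀ + j)).re) + ζ x k

/-- `∂₁Φ` of the `k`-th component. -/
noncomputable def pd1' {m : ℕ} (Φ : ℂ → Fin m → ℝ) (x : ℂ) (k : Fin m) : ℝ :=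
  fderiv ℝ (fun y => Φ y k) x 1

/-- `∂₂Φ` of the `k`-th component. -/
noncomputable def pd2' {m : ℕ} (Φ : ℂ → Fin m → ℝ) (x : ℂ) (k : Fin m) : ℝ :=
  fderiv ℝ (fun y => Φ y k) x Complex.I

/-!
Write `2 ∂_z u = ∂₁u - i ∂₂u`. For real vectors `a, b`, `∑ (a_k - i b_k)² = |a|² - |b|² - 2i a·b`,
so conformality of `Φ` says exactly `∑_k (2 ∂_z Φ_k)² = 0`. Since `2 ∂_z Re f = f'` for holomorphic
`f`, `2 ∂_z Φ_k = x^{θ₀-1} p_k(x) + 2 ∂_z ζ_k` with `p_k = ∑_j (θ₀+j) A_{j,k} X^j`, and the error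
term is `O(|x|^{2θ₀-1-ε₁})`. Dividing by `x^{θ₀-1}` shows that the polynomial `∑_k p_k²` is
`O(|x|^{θ₀-ε₁})` near `0`, so its coefficients of degree `s < θ₀ - ε₁` vanish; these are the sums in
the theorem.
-/

open Asymptotics Filter Topology Polynomial

theorem tendsto_norm_rpow_nhdsNE_zero {𝕜 : Type*} [NormedField 𝕜] {ρ : ℝ} (hρ : 0 < ρ) :
    Tendsto (fun x : 𝕜 => ‖x‖ ^ ρ) (𝓝[≠] 0) (𝓝 0) := by
  simpa [Real.zero_rpow hρ.ne'] using
    ((continuous_norm.rpow_const fun _ => Or.inr hρ.le).tendsto (0 : 𝕜)).mono_left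
      nhdsWithin_le_nhds

theorem coeff_eq_zero_of_isBigO_rpow {𝕜 : Type*} [NontriviallyNormedField 𝕜] {P : 𝕜[X]} {ρ : ℝ}
    (hP : (fun x => P.eval x) =O[𝓝[≠] 0] fun x => ‖x‖ ^ ρ) (n : ℕ) (hn : (n : ℝ) < ρ) :
    P.coeff n = 0 := by
  induction n using Nat.strong_induction_on with
  | _ n ih =>
    obtain ⟨Q, rfl⟩ : X ^ n ∣ P := X_pow_dvd_iff.mpr fun d hd =>
      ih d hd (lt_trans (by exact_mod_cast hd) hn)
    have hQ : (fun x => Q.eval x) =O[𝓝[≠] 0] fun x => ‖x‖ ^ (ρ - n) := by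
      obtain ⟨c, hc⟩ := hP.bound
      refine IsBigO.of_bound c ?_
      filter_upwards [hc, self_mem_nhdsWithin] with x hx hx0
      have hxpos : 0 < ‖x‖ := norm_pos_iff.mpr hx0
      rw [eval_mul, eval_pow, eval_X, norm_mul, norm_pow, Real.norm_of_nonneg (by positivity)] at hx
      rw [Real.norm_of_nonneg (by positivity), Real.rpow_sub hxpos, Real.rpow_natCast,
        mul_div_assoc', le_div_iff₀ (by positivity), mul_comm]
      exact hx
    have hQ0 : Q.eval 0 = 0 :=
      tendsto_nhds_unique (Q.continuous.tendsto 0 |>.mono_left nhdsWithin_le_nhds)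
        (hQ.trans_tendsto (tendsto_norm_rpow_nhdsNE_zero (sub_pos.mpr hn)))
    simpa [coeff_zero_eq_eval_zero, hQ0] using coeff_X_pow_mul Q n 0

theorem isBigO_sum_sq_of_sum_add_sq_eq_zero {α R ι : Type*} [SeminormedCommRing R] [Fintype ι]
    {l : Filter α} {p d : ι → α → R} {g : α → ℝ}
    (hp : ∀ k, p k =O[l] fun _ => (1 : ℝ)) (hg : g =O[l] fun _ => (1 : ℝ))
    (hd : ∀ k, d k =O[l] g) (h : ∀ᶠ x in l, ∑ k, (p k x + d k x) ^ 2 = 0) :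
    (fun x => ∑ k, p k x ^ 2) =O[l] g := by
  have hcross : (fun x => ∑ k, d k x * (2 * p k x + d k x)) =O[l] g := by
    refine IsBigO.fun_sum fun k _ => ?_
    simpa using (hd k).mul (((hp k).const_mul_left 2).add ((hd k).trans hg))
  refine hcross.neg_left.congr' ?_ EventuallyEq.rfl
  filter_upwards [h] with x hx
  rw [neg_eq_iff_add_eq_zero, ← hx, ← Finset.sum_add_distrib]
  exact Finset.sum_congr rfl fun k _ => by ring

noncomputable def weightedPoly {R : Type*} [Semiring R] (θ₀ : ℕ) (a : ℕ → R) : R[X] :=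
  ∑ j ∈ Finset.range θ₀, C ((θ₀ + j : ℕ) * a j) * X ^ j

theorem coeff_weightedPoly {R : Type*} [Semiring R] {θ₀ i : ℕ} (a : ℕ → R) (hi : i < θ₀) :
    (weightedPoly θ₀ a).coeff i = (θ₀ + i : ℕ) * a i := by
  simp only [weightedPoly, finsetSum_coeff, coeff_C_mul_X_pow]
  simp [hi]

theorem coeff_sum_sq_weightedPoly {R ι : Type*} [CommSemiring R] [Fintype ι] {θ₀ s : ℕ}
    (A : ℕ → ι → R) (hs : s < θ₀) :
    (∑ k, weightedPoly θ₀ (fun j => A j k) ^ 2).coeff s =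
      ∑ j ∈ Finset.range (s + 1),
        (((θ₀ + j) * (θ₀ + s - j) : ℕ) : R) * ∑ k, A j k * A (s - j) k := by
  simp_rw [finsetSum_coeff, sq, coeff_mul, Finset.Nat.sum_antidiagonal_eq_sum_range_succ_mk,
    Finset.mul_sum]
  rw [Finset.sum_comm]
  refine Finset.sum_congr rfl fun j hj => Finset.sum_congr rfl fun k _ => ?_
  have hjs : j ≤ s := Nat.lt_succ_iff.mp (Finset.mem_range.mp hj)
  rw [coeff_weightedPoly _ (by omega), coeff_weightedPoly _ (by omega),
    show θ₀ + s - j = θ₀ + (s - j) by omega]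
  push_cast
  ring

theorem hasDerivAt_sum_mul_pow {𝕜 : Type*} [NontriviallyNormedField 𝕜] {θ₀ : ℕ} (hθ : 1 ≤ θ₀)
    (a : ℕ → 𝕜) (x : 𝕜) :
    HasDerivAt (fun y => ∑ j ∈ Finset.range θ₀, a j * y ^ (θ₀ + j))
      (x ^ (θ₀ - 1) * (weightedPoly θ₀ a).eval x) x := by
  refine (HasDerivAt.fun_sum fun j _ =>
    (hasDerivAt_pow (θ₀ + j) x).const_mul (a j)).congr_deriv ?_
  simp only [weightedPoly, eval_finsetSum, eval_mul, eval_C, eval_pow, eval_X, Finset.mul_sum]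
  refine Finset.sum_congr rfl fun j _ => ?_
  rw [show θ₀ + j - 1 = θ₀ - 1 + j by omega, pow_add]
  ring

noncomputable def twoDz (u : ℂ → ℝ) (x : ℂ) : ℂ := fderiv ℝ u x 1 - I * fderiv ℝ u x I

theorem twoDz_add {u v : ℂ → ℝ} {x : ℂ} (hu : DifferentiableAt ℝ u x)
    (hv : DifferentiableAt ℝ v x) : twoDz (fun y => u y + v y) x = twoDz u x + twoDz v x := by
  simp only [twoDz, fderiv_fun_add hu hv, add_apply, ofReal_add]
  ring

theorem twoDz_re_of_hasDerivAt {f : ℂ → ℂ} {f' x : ℂ} (hf : HasDerivAt f f' x) :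
    twoDz (fun y => (f y).re) x = f' := by
  have hre : HasFDerivAt (fun y => (f y).re)
      (reCLM.comp ((ContinuousLinearMap.toSpanSingleton ℂ f').restrictScalars ℝ)) x :=
    reCLM.hasFDerivAt.comp x (hf.hasFDerivAt.restrictScalars ℝ)
  rw [twoDz, hre.fderiv]
  apply Complex.ext <;> simp

theorem norm_twoDz_le (u : ℂ → ℝ) (x : ℂ) : ‖twoDz u x‖ ≤ 2 * ‖fderiv ℝ u x‖ :=
  calc ‖twoDz u x‖ ≤ ‖fderiv ℝ u x 1‖ + ‖fderiv ℝ u x I‖ := by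
        simpa [twoDz] using norm_sub_le (fderiv ℝ u x 1 : ℂ) (I * fderiv ℝ u x I)
    _ ≤ ‖fderiv ℝ u x‖ * ‖(1 : ℂ)‖ + ‖fderiv ℝ u x‖ * ‖I‖ :=
        add_le_add ((fderiv ℝ u x).le_opNorm 1) ((fderiv ℝ u x).le_opNorm I)
    _ = 2 * ‖fderiv ℝ u x‖ := by rw [norm_one, norm_I]; ring

theorem sum_sq_ofReal_sub_I_mul_eq_zero {ι : Type*} [Fintype ι] {a b : ι → ℝ}
    (horth : ∑ k, a k * b k = 0) (hnorm : ∑ k, a k ^ 2 = ∑ k, b k ^ 2) :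
    ∑ k, ((a k : ℂ) - I * b k) ^ 2 = 0 := by
  have hexp : ∀ k,
      ((a k : ℂ) - I * b k) ^ 2 = ((a k ^ 2 - b k ^ 2 : ℝ) : ℂ) - 2 * I * (a k * b k : ℝ) := by
    intro k
    push_cast
    linear_combination (b k : ℂ) ^ 2 * I_sq
  simp_rw [hexp, Finset.sum_sub_distrib, ← Finset.mul_sum, ← ofReal_sum, Finset.sum_sub_distrib,
    hnorm, horth]
  simp

theorem isBigO_twoDz_div_pow {u : ℂ → ℝ} {C α : ℝ} (n : ℕ)
    (hu : ∀ x : ℂ, x ≠ 0 → ‖x‖ < 1 → ‖fderiv ℝ u x‖ ≤ C * ‖x‖ ^ α) :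
    (fun x => twoDz u x / x ^ n) =O[𝓝[≠] 0] fun x => ‖x‖ ^ (α - n) := by
  refine IsBigO.of_bound (2 * C) ?_
  have hball : ∀ᶠ x : ℂ in 𝓝[≠] 0, ‖x‖ < 1 := nhdsWithin_le_nhds <| by
    filter_upwards [ball_mem_nhds (0 : ℂ) one_pos] with x hx using mem_ball_zero_iff.mp hx
  filter_upwards [hball, self_mem_nhdsWithin] with x hx1 hx0
  have hxpos : 0 < ‖x‖ := norm_pos_iff.mpr hx0
  rw [norm_div, norm_pow, Real.norm_of_nonneg (by positivity), Real.rpow_sub hxpos,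
    Real.rpow_natCast, div_le_iff₀ (by positivity), mul_div_assoc', div_mul_cancel₀ _ (by positivity)]
  linarith [norm_twoDz_le u x, hu x hx0 hx1]

theorem twoDz_phiExp {m θ₀ : ℕ} (hθ : 1 ≤ θ₀) (A : ℕ → Fin m → ℂ) {ζ : ℂ → Fin m → ℝ} {x : ℂ}
    {k : Fin m} (hζ : DifferentiableAt ℝ (fun y => ζ y k) x) :
    twoDz (fun y => PhiExp m θ₀ A ζ y k) x =
      x ^ (θ₀ - 1) * (weightedPoly θ₀ fun j => A j k).eval x + twoDz (fun y => ζ y k) x := by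
  have hpoly := hasDerivAt_sum_mul_pow hθ (fun j => A j k) x
  have hre : DifferentiableAt ℝ (fun y => (∑ j ∈ Finset.range θ₀, A j k * y ^ (θ₀ + j)).re) x :=
    (reCLM.hasFDerivAt.comp x (hpoly.hasFDerivAt.restrictScalars ℝ)).differentiableAt
  simp only [PhiExp, ← re_sum]
  rw [twoDz_add hre hζ, twoDz_re_of_hasDerivAt hpoly]

theorem sum_sq_twoDz_eq_zero {m : ℕ} {Φ : ℂ → Fin m → ℝ} {x : ℂ}
    (hconf : (∑ k, pd1' Φ x k * pd2' Φ x k) = 0 ∧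
      Real.sqrt (∑ k, (pd1' Φ x k) ^ 2) = Real.sqrt (∑ k, (pd2' Φ x k) ^ 2)) :
    ∑ k, twoDz (fun y => Φ y k) x ^ 2 = 0 :=
  sum_sq_ofReal_sub_I_mul_eq_zero hconf.1 <|
    (Real.sqrt_inj (by positivity) (by positivity)).mp hconf.2

theorem sum_sq_weightedPoly_add_twoDz_div_eq_zero {m θ₀ : ℕ} (hθ : 1 ≤ θ₀)
    {A : ℕ → Fin m → ℂ} {ζ : ℂ → Fin m → ℝ} {x : ℂ} (hx : x ≠ 0)
    (hζ : ∀ k, DifferentiableAt ℝ (fun y => ζ y k) x)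
    (hconf : ∑ k, twoDz (fun y => PhiExp m θ₀ A ζ y k) x ^ 2 = 0) :
    ∑ k, ((weightedPoly θ₀ fun j => A j k).eval x + twoDz (fun y => ζ y k) x / x ^ (θ₀ - 1)) ^ 2
      = 0 := by
  have hxn : x ^ (θ₀ - 1) ≠ 0 := pow_ne_zero _ hx
  simp_rw [twoDz_phiExp hθ A (hζ _)] at hconf
  refine (mul_eq_zero.mp ?_).resolve_left (pow_ne_zero 2 hxn)
  rw [← hconf, Finset.mul_sum]
  refine Finset.sum_congr rfl fun k _ => ?_
  field_simp

theorem stmt11_general (m θ₀ : ℕ)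
    (ε₁ : ℝ) (hε : ε₁ ∈ Set.Ioo (0 : ℝ) 1)
    (A : ℕ → Fin m → ℂ) (ζ : ℂ → Fin m → ℝ) (C : ℝ)
    (hζ : ContDiffOn ℝ 1 ζ (ball (0 : ℂ) 1 \ {0}))
    (hζb : ∀ x : ℂ, x ≠ 0 → ‖x‖ < 1 → ∀ k : Fin m,
      ‖fderiv ℝ (fun y => ζ y k) x‖ ≤ C * ‖x‖ ^ ((2 * θ₀ : ℝ) - 1 - ε₁))
    (hconf : ∀ x ∈ ball (0 : ℂ) 1 \ {0},
      (∑ k, pd1' (PhiExp m θ₀ A ζ) x k * pd2' (PhiExp m θ₀ A ζ) x k) = 0 ∧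
      Real.sqrt (∑ k, (pd1' (PhiExp m θ₀ A ζ) x k) ^ 2)
        = Real.sqrt (∑ k, (pd2' (PhiExp m θ₀ A ζ) x k) ^ 2)) :
    ∀ s : ℕ, s < θ₀ →
      (∑ j ∈ Finset.range (s + 1),
        (((θ₀ + j) * (θ₀ + s - j) : ℕ) : ℂ) * (∑ k, A j k * A (s - j) k)) = 0 := by
  intro s hs
  have hρ : (s : ℝ) < θ₀ - ε₁ := by
    have : (s : ℝ) + 1 ≤ θ₀ := by exact_mod_cast hs
    linarith [hε.2]
  have hexp : (2 * θ₀ : ℝ) - 1 - ε₁ - ((θ₀ - 1 : ℕ) : ℝ) = θ₀ - ε₁ := by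
    rw [Nat.cast_sub (by omega)]; push_cast; ring
  have hdiff : ∀ x ∈ ball (0 : ℂ) 1 \ {0}, ∀ k, DifferentiableAt ℝ (fun y => ζ y k) x :=
    fun x hx => differentiableAt_pi.mp <| (hζ.differentiableOn one_ne_zero).differentiableAt
      ((isOpen_ball.sdiff isClosed_singleton).mem_nhds hx)
  have hsum : ∀ᶠ x in 𝓝[≠] (0 : ℂ), ∑ k, ((weightedPoly θ₀ fun j => A j k).eval x
      + twoDz (fun y => ζ y k) x / x ^ (θ₀ - 1)) ^ 2 = 0 := by
    filter_upwards [sdiff_mem_nhdsWithin_compl (ball_mem_nhds 0 one_pos) _] with x hx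
    exact sum_sq_weightedPoly_add_twoDz_div_eq_zero (by omega) hx.2 (hdiff x hx)
      (sum_sq_twoDz_eq_zero (hconf x hx))
  have hR := isBigO_sum_sq_of_sum_add_sq_eq_zero
    (fun k => ((Polynomial.continuous _).tendsto 0 |>.mono_left nhdsWithin_le_nhds).isBigO_one ℝ)
    ((tendsto_norm_rpow_nhdsNE_zero (ρ := θ₀ - ε₁) (by linarith)).isBigO_one ℝ)
    (fun k => hexp ▸ isBigO_twoDz_div_pow (θ₀ - 1) fun x hx0 hx1 => hζb x hx0 hx1 k) hsum
  rw [← coeff_sum_sq_weightedPoly A hs]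
  exact coeff_eq_zero_of_isBigO_rpow (by simpa [eval_finsetSum] using hR) s hρ

theorem stmt11 (m θ₀ : ℕ) (hm : 2 ≤ m) (hθ : 1 ≤ θ₀)
    (ε₁ : ℝ) (hε : ε₁ ∈ Set.Ioo (0 : ℝ) 1)
    (A : ℕ → Fin m → ℂ) (ζ : ℂ → Fin m → ℝ) (C : ℝ)
    (hζ : ContDiffOn ℝ 1 ζ (ball (0 : ℂ) 1 \ {0}))
    (hζb : ∀ x : ℂ, x ≠ 0 → ‖x‖ < 1 → ∀ k : Fin m,
      ‖fderiv ℝ (fun y => ζ y k) x‖ ≤ C * ‖x‖ ^ ((2 * θ₀ : ℝ) - 1 - ε₁))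
    (hconf : ∀ x ∈ ball (0 : ℂ) 1 \ {0},
      (∑ k, pd1' (PhiExp m θ₀ A ζ) x k * pd2' (PhiExp m θ₀ A ζ) x k) = 0 ∧
      Real.sqrt (∑ k, (pd1' (PhiExp m θ₀ A ζ) x k) ^ 2)
        = Real.sqrt (∑ k, (pd2' (PhiExp m θ₀ A ζ) x k) ^ 2)) :
    ∀ s : ℕ, s < θ₀ →
      (∑ j ∈ Finset.range (s + 1),
        (((θ₀ + j) * (θ₀ + s - j) : ℕ) : ℂ) * (∑ k, A j k * A (s - j) k)) = 0 :=
  stmt11_general m θ₀ ε₁ hε A ζ C hζ hζb hconf
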